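/- arXiv:1803.09050 — 5 statements merged into one kernel-verified Lean document; each statement's English description precedes it below -/
import Mathlib

section
/- For every θ ∈ ℝ^d, every batch B, and every step size α ≥ 0, the reweighted SGD update satisfies the descent inequality G(U(θ, B, α)) ≤ G(θ) − (α/n)·(1 − L·α·σ²/2)·T(θ, B). -/
open scoped RealInnerProductSpace

open Finset

/-! Along the step `v`, the `L`-Lipschitz gradient of `G` gives the quadratic upper bound
`G (θ + v) ≤ G θ + ⟪∇G θ, v⟫ + L/2 ‖v‖²`. For the reweighted step, the linear term is exactly
`-(α/n) T` because the weights are the positive parts of the inner products `⟪∇G θ, ∇f_i θ⟫`,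
while the bounded gradients and Cauchy–Schwarz give `‖v‖² ≤ (α/n)² n σ² T`. -/

lemma max_zero_mul_self {R : Type*} [Ring R] [LinearOrder R] [IsOrderedRing R] (a : R) :
    max a 0 * a = max a 0 ^ 2 := by
  rcases le_total a 0 with h | h <;> simp [h, sq]

lemma norm_sum_smul_sq_le {ι F : Type*} [SeminormedAddCommGroup F] [NormedSpace ℝ F]
    (s : Finset ι) (w : ι → ℝ) (g : ι → F) {σ : ℝ} (hg : ∀ i ∈ s, ‖g i‖ ≤ σ) :
    ‖∑ i ∈ s, w i • g i‖ ^ 2 ≤ #s * σ ^ 2 * ∑ i ∈ s, w i ^ 2 := by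
  have hnorm : ‖∑ i ∈ s, w i • g i‖ ≤ σ * ∑ i ∈ s, |w i| := by
    rw [mul_sum]
    refine (norm_sum_le _ _).trans (sum_le_sum fun i hi => ?_)
    rw [norm_smul, Real.norm_eq_abs, mul_comm σ]
    exact mul_le_mul_of_nonneg_left (hg i hi) (abs_nonneg _)
  calc ‖∑ i ∈ s, w i • g i‖ ^ 2 ≤ σ ^ 2 * (∑ i ∈ s, |w i|) ^ 2 := by
        rw [← mul_pow]; exact pow_le_pow_left₀ (norm_nonneg _) hnorm 2
    _ ≤ σ ^ 2 * (#s * ∑ i ∈ s, |w i| ^ 2) := by gcongr; exact sq_sum_le_card_mul_sum_sq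
    _ = #s * σ ^ 2 * ∑ i ∈ s, w i ^ 2 := by simp only [sq_abs]; ring

section InnerProductSpace

variable {E : Type*} [NormedAddCommGroup E] [InnerProductSpace ℝ E]

lemma inner_sum_max_inner_zero_smul {ι : Type*} (a : E) (s : Finset ι) (g : ι → E) :
    ⟪a, ∑ i ∈ s, max ⟪a, g i⟫ 0 • g i⟫ = ∑ i ∈ s, max ⟪a, g i⟫ 0 ^ 2 := by
  rw [inner_sum]
  exact sum_congr rfl fun i _ => by rw [real_inner_smul_right, max_zero_mul_self]

variable [CompleteSpace E] {g : E → ℝ}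

lemma hasDerivAt_comp_add_smul (hg : Differentiable ℝ g) (x v : E) (t : ℝ) :
    HasDerivAt (fun s : ℝ => g (x + s • v)) ⟪gradient g (x + t • v), v⟫ t := by
  have hline : HasDerivAt (fun s : ℝ => x + s • v) v t := by
    simpa using ((hasDerivAt_id t).smul_const v).const_add x
  have := (hg _).hasGradientAt.hasFDerivAt.comp_hasDerivAt t hline
  rwa [InnerProductSpace.toDual_apply_apply] at this

lemma inner_gradient_add_smul_sub_le {L : ℝ}
    (hgL : ∀ x y, ‖gradient g x - gradient g y‖ ≤ L * ‖x - y‖) (x v : E) {t : ℝ} (ht : 0 ≤ t) :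
    ⟪gradient g (x + t • v) - gradient g x, v⟫ ≤ L * t * ‖v‖ ^ 2 :=
  calc ⟪gradient g (x + t • v) - gradient g x, v⟫
      ≤ ‖gradient g (x + t • v) - gradient g x‖ * ‖v‖ := real_inner_le_norm _ _
    _ ≤ L * ‖(x + t • v) - x‖ * ‖v‖ := by gcongr; exact hgL _ _
    _ = L * t * ‖v‖ ^ 2 := by
        rw [add_sub_cancel_left, norm_smul, Real.norm_of_nonneg ht]; ring

theorem le_add_inner_gradient_add_of_lipschitz_gradient (hg : Differentiable ℝ g) {L : ℝ}
    (hgL : ∀ x y, ‖gradient g x - gradient g y‖ ≤ L * ‖x - y‖) (x v : E) :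
    g (x + v) ≤ g x + ⟪gradient g x, v⟫ + L / 2 * ‖v‖ ^ 2 := by
  set c := ⟪gradient g x, v⟫
  let χ : ℝ → ℝ := fun t => g (x + t • v) - (t * c + L / 2 * t ^ 2 * ‖v‖ ^ 2)
  have hχ : ∀ t, HasDerivAt χ (⟪gradient g (x + t • v), v⟫ - (c + L * t * ‖v‖ ^ 2)) t := by
    intro t
    refine (hasDerivAt_comp_add_smul hg x v t).sub ?_
    refine (((hasDerivAt_id t).mul_const c).add
      (((hasDerivAt_pow 2 t).const_mul (L / 2)).mul_const (‖v‖ ^ 2))).congr_deriv ?_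
    push_cast; ring
  have hanti : AntitoneOn χ (Set.Icc 0 1) := by
    refine antitoneOn_of_hasDerivWithinAt_nonpos (convex_Icc 0 1)
      (fun t _ => (hχ t).continuousAt.continuousWithinAt)
      (fun t _ => (hχ t).hasDerivWithinAt) fun t ht => ?_
    rw [interior_Icc] at ht
    have := inner_gradient_add_smul_sub_le hgL x v ht.1.le
    rw [inner_sub_left] at this
    linarith
  have h01 := hanti (by simp) (by simp) zero_le_one
  simp only [χ, one_smul, zero_smul, add_zero] at h01
  linarith

end InnerProductSpace

theorem reweighted_sgd_descent_inequality_general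
    (d N M n : ℕ) (hn : 0 < n) (hMN : M ≤ N)
    (σ L : ℝ) (hL : 0 < L)
    (f : Fin N → EuclideanSpace ℝ (Fin d) → ℝ)
    (hf : ∀ i, ContDiff ℝ 1 (f i))
    (hfb : ∀ i x, ‖gradient (f i) x‖ ≤ σ)
    (G : EuclideanSpace ℝ (Fin d) → ℝ)
    (hG : ∀ θ, G θ = (1 / (M : ℝ)) * ∑ i : Fin M, f (Fin.castLE hMN i) θ)
    (hGL : ∀ x y, ‖gradient G x - gradient G y‖ ≤ L * ‖x - y‖)
    (U : EuclideanSpace ℝ (Fin d) → (Fin n → Fin N) → ℝ → EuclideanSpace ℝ (Fin d))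
    (hU : ∀ θ B α, U θ B α = θ - (α / (n : ℝ)) • ∑ k : Fin n,
        max ⟪gradient G θ, gradient (f (B k)) θ⟫ 0 • gradient (f (B k)) θ)
    (T : EuclideanSpace ℝ (Fin d) → (Fin n → Fin N) → ℝ)
    (hT : ∀ θ B, T θ B = ∑ k : Fin n, (max ⟪gradient G θ, gradient (f (B k)) θ⟫ 0) ^ 2)
    (θ : EuclideanSpace ℝ (Fin d)) (B : Fin n → Fin N) (α : ℝ) :
    G (U θ B α) ≤ G θ - (α / (n : ℝ)) * (1 - L * α * σ ^ 2 / 2) * T θ B := by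
  have hGd : Differentiable ℝ G := by
    rw [funext hG]
    exact .const_mul (.fun_sum fun i _ => (hf _).differentiable one_ne_zero) _
  set s := ∑ k : Fin n, max ⟪gradient G θ, gradient (f (B k)) θ⟫ 0 • gradient (f (B k)) θ
  have hstep : U θ B α = θ + (-(α / n)) • s := by rw [hU, neg_smul, sub_eq_add_neg]
  have hinner : ⟪gradient G θ, (-(α / n)) • s⟫ = -(α / n) * T θ B := by
    rw [real_inner_smul_right, inner_sum_max_inner_zero_smul, hT]
  have hnorm : ‖(-(α / n)) • s‖ ^ 2 ≤ (α / n) ^ 2 * (n * σ ^ 2 * T θ B) := by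
    rw [norm_smul, mul_pow, Real.norm_eq_abs, sq_abs, neg_sq, hT]
    gcongr
    simpa only [card_univ, Fintype.card_fin] using
      norm_sum_smul_sq_le univ _ _ fun k _ => hfb (B k) θ
  have hn' : (n : ℝ) ≠ 0 := by positivity
  calc G (U θ B α) ≤ G θ + -(α / n) * T θ B + L / 2 * ((α / n) ^ 2 * (n * σ ^ 2 * T θ B)) := by
        rw [hstep, ← hinner]
        grw [le_add_inner_gradient_add_of_lipschitz_gradient hGd hGL θ, hnorm]
    _ = G θ - (α / (n : ℝ)) * (1 - L * α * σ ^ 2 / 2) * T θ B := by field_simp; ring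

/-- For every θ ∈ ℝ^d, every batch B, and every step size α ≥ 0, the reweighted
SGD update satisfies the descent inequality
`G(U(θ, B, α)) ≤ G(θ) − (α/n)·(1 − L·α·σ²/2)·T(θ, B)`. -/
theorem reweighted_sgd_descent_inequality
    (d N M n : ℕ) (hd : 0 < d) (hN : 0 < N) (hM : 0 < M) (hn : 0 < n) (hMN : M ≤ N)
    (σ L : ℝ) (hσ : 0 < σ) (hL : 0 < L)
    (f : Fin N → EuclideanSpace ℝ (Fin d) → ℝ)
    (hf : ∀ i, ContDiff ℝ 1 (f i))
    (hfb : ∀ i x, ‖gradient (f i) x‖ ≤ σ)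
    (G : EuclideanSpace ℝ (Fin d) → ℝ)
    (hG : ∀ θ, G θ = (1 / (M : ℝ)) * ∑ i : Fin M, f (Fin.castLE hMN i) θ)
    (hGL : ∀ x y, ‖gradient G x - gradient G y‖ ≤ L * ‖x - y‖)
    (U : EuclideanSpace ℝ (Fin d) → (Fin n → Fin N) → ℝ → EuclideanSpace ℝ (Fin d))
    (hU : ∀ θ B α, U θ B α = θ - (α / (n : ℝ)) • ∑ k : Fin n,
        max ⟪gradient G θ, gradient (f (B k)) θ⟫ 0 • gradient (f (B k)) θ)
    (T : EuclideanSpace ℝ (Fin d) → (Fin n → Fin N) → ℝ)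
    (hT : ∀ θ B, T θ B = ∑ k : Fin n, (max ⟪gradient G θ, gradient (f (B k)) θ⟫ 0) ^ 2)
    (θ : EuclideanSpace ℝ (Fin d)) (B : Fin n → Fin N) (α : ℝ) (hα : 0 ≤ α) :
    G (U θ B α) ≤ G θ - (α / (n : ℝ)) * (1 - L * α * σ ^ 2 / 2) * T θ B :=
  reweighted_sgd_descent_inequality_general d N M n hn hMN σ L hL f hf hfb G hG hGL U hU T hT θ B α
end

section
/- (Lemma 1, monotonicity part.) If the step sizes satisfy 0 ≤ α_t ≤ 2/(L·σ²), then along the reweighted SGD iteration θ_{t+1} = U(θ_t, B_t, α_t) the validation loss monotonically decreases for any sequence of training batches B_0, B_1, …: namely G(θ_{t+1}) ≤ G(θ_t) for all t. -/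
open scoped RealInnerProductSpace

/-! With weights `wₖ = max ⟪∇G θ, gₖ⟫ 0`, the update direction `u = ∑ₖ wₖ • gₖ` satisfies
`⟪∇G θ, u⟫ = ∑ₖ wₖ²`, while `‖u‖² ≤ n σ² ∑ₖ wₖ²` by Cauchy–Schwarz. The descent lemma for the
`L`-smooth `G` then gives `G (θ - (α/n) • u) ≤ G θ - (α/n) (1 - L α σ² / 2) ∑ₖ wₖ²`,
and the last term is nonpositive when `α ≤ 2 / (L σ²)`. -/

section LipschitzGradient

variable {E : Type*} [NormedAddCommGroup E] [InnerProductSpace ℝ E] [CompleteSpace E]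
  {G : E → ℝ} {L : ℝ}

theorem hasDerivAt_apply_sub_smul {x v : E} {t : ℝ} (hG : DifferentiableAt ℝ G (x - t • v)) :
    HasDerivAt (fun s : ℝ => G (x - s • v)) (-⟪gradient G (x - t • v), v⟫) t := by
  have hline : HasDerivAt (fun s : ℝ => x - s • v) (-v) t := by
    simpa using ((hasDerivAt_id t).smul_const v).const_sub x
  have h := hG.hasGradientAt.hasFDerivAt.comp_hasDerivAt t hline
  rw [map_neg, InnerProductSpace.toDual_apply_apply] at h
  exact h

/-- The descent lemma: the Lipschitz bound on `∇G` makes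
`t ↦ G (x - t • v) + t ⟪∇G x, v⟫ - L t² ‖v‖² / 2` antitone on `[0, 1]`. -/
theorem apply_sub_le_of_lipschitz_gradient (hG : Differentiable ℝ G)
    (hGL : ∀ x y, ‖gradient G x - gradient G y‖ ≤ L * ‖x - y‖) (x v : E) :
    G (x - v) ≤ G x - ⟪gradient G x, v⟫ + L / 2 * ‖v‖ ^ 2 := by
  set φ : ℝ → ℝ := fun t => G (x - t • v) + t * ⟪gradient G x, v⟫ - L / 2 * t ^ 2 * ‖v‖ ^ 2
  have hφ (t : ℝ) : HasDerivAt φ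
      (⟪gradient G x - gradient G (x - t • v), v⟫ - L * t * ‖v‖ ^ 2) t := by
    refine (((hasDerivAt_apply_sub_smul (hG _)).add (hasDerivAt_mul_const _)).sub
      (((hasDerivAt_pow 2 t).const_mul (L / 2)).mul_const (‖v‖ ^ 2))).congr_deriv ?_
    rw [inner_sub_left]
    push_cast
    ring
  have hderiv {t : ℝ} (ht : 0 ≤ t) : deriv φ t ≤ 0 := by
    rw [(hφ t).deriv, sub_nonpos]
    calc ⟪gradient G x - gradient G (x - t • v), v⟫
        ≤ ‖gradient G x - gradient G (x - t • v)‖ * ‖v‖ := real_inner_le_norm _ _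
      _ ≤ L * ‖x - (x - t • v)‖ * ‖v‖ := by gcongr; exact hGL _ _
      _ = L * t * ‖v‖ ^ 2 := by
        rw [sub_sub_cancel, norm_smul, Real.norm_of_nonneg ht]; ring
  have hanti : AntitoneOn φ (Set.Icc 0 1) :=
    antitoneOn_of_deriv_nonpos (convex_Icc 0 1)
      (fun t _ => (hφ t).continuousAt.continuousWithinAt)
      (fun t _ => (hφ t).differentiableAt.differentiableWithinAt)
      (fun t ht => hderiv (interior_subset ht).1)
  have h01 := hanti (Set.left_mem_Icc.2 zero_le_one) (Set.right_mem_Icc.2 zero_le_one) zero_le_one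
  simp only [φ, zero_smul, sub_zero, zero_mul, add_zero, one_smul, one_mul, one_pow] at h01
  ring_nf at h01
  linarith

theorem apply_sub_smul_le_of_lipschitz_gradient (hG : Differentiable ℝ G)
    (hGL : ∀ x y, ‖gradient G x - gradient G y‖ ≤ L * ‖x - y‖) (x u : E) {c : ℝ} (hc : 0 ≤ c)
    (hu : L * c * ‖u‖ ^ 2 ≤ 2 * ⟪gradient G x, u⟫) :
    G (x - c • u) ≤ G x := by
  have h := apply_sub_le_of_lipschitz_gradient hG hGL x (c • u)
  rw [real_inner_smul_right, norm_smul, Real.norm_of_nonneg hc] at h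
  nlinarith

end LipschitzGradient

section ReweightedDirection

variable {ι E : Type*} [Fintype ι] [NormedAddCommGroup E] [InnerProductSpace ℝ E]

theorem norm_sum_smul_sq_le_s1 (w : ι → ℝ) (g : ι → E) {σ : ℝ} (hg : ∀ k, ‖g k‖ ≤ σ) :
    ‖∑ k, w k • g k‖ ^ 2 ≤ Fintype.card ι * σ ^ 2 * ∑ k, w k ^ 2 := by
  have hnorm : ‖∑ k, w k • g k‖ ≤ σ * ∑ k, |w k| := by
    calc ‖∑ k, w k • g k‖ ≤ ∑ k, ‖w k • g k‖ := norm_sum_le _ _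
      _ ≤ ∑ k, |w k| * σ := by
        gcongr with k
        rw [norm_smul, Real.norm_eq_abs]
        exact mul_le_mul_of_nonneg_left (hg k) (abs_nonneg _)
      _ = σ * ∑ k, |w k| := by rw [Finset.mul_sum]; simp only [mul_comm]
  calc ‖∑ k, w k • g k‖ ^ 2 ≤ σ ^ 2 * (∑ k, |w k|) ^ 2 := by
        rw [← mul_pow]; exact pow_le_pow_left₀ (norm_nonneg _) hnorm 2
    _ ≤ σ ^ 2 * (Fintype.card ι * ∑ k, |w k| ^ 2) := by
        gcongr; exact sq_sum_le_card_mul_sum_sq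
    _ = Fintype.card ι * σ ^ 2 * ∑ k, w k ^ 2 := by simp only [sq_abs]; ring

noncomputable def reweightedDirection (a : E) (g : ι → E) : E :=
  ∑ k, max ⟪a, g k⟫ 0 • g k

theorem inner_reweightedDirection (a : E) (g : ι → E) :
    ⟪a, reweightedDirection a g⟫ = ∑ k, max ⟪a, g k⟫ 0 ^ 2 := by
  rw [reweightedDirection, inner_sum]
  refine Finset.sum_congr rfl fun k _ => ?_
  rw [real_inner_smul_right, sq]
  rcases le_total ⟪a, g k⟫ 0 with h | h
  · simp [max_eq_right h]
  · rw [max_eq_left h]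

theorem norm_reweightedDirection_sq_le (a : E) (g : ι → E) {σ : ℝ} (hg : ∀ k, ‖g k‖ ≤ σ) :
    ‖reweightedDirection a g‖ ^ 2 ≤ Fintype.card ι * σ ^ 2 * ⟪a, reweightedDirection a g⟫ := by
  rw [inner_reweightedDirection]
  exact norm_sum_smul_sq_le_s1 _ g hg

end ReweightedDirection

theorem apply_sub_smul_reweightedDirection_le {ι E : Type*} [Fintype ι] [Nonempty ι]
    [NormedAddCommGroup E] [InnerProductSpace ℝ E] [CompleteSpace E] {G : E → ℝ} {L σ α : ℝ}
    (hG : Differentiable ℝ G) (hGL : ∀ x y, ‖gradient G x - gradient G y‖ ≤ L * ‖x - y‖)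
    (hL : 0 < L) (hσ : 0 < σ) (hα : 0 ≤ α) (hα' : α ≤ 2 / (L * σ ^ 2))
    (g : ι → E) (hg : ∀ k, ‖g k‖ ≤ σ) (x : E) :
    G (x - (α / Fintype.card ι) • reweightedDirection (gradient G x) g) ≤ G x := by
  set u := reweightedDirection (gradient G x) g
  have hn : (0 : ℝ) < Fintype.card ι := by exact_mod_cast Fintype.card_pos
  have hinner : 0 ≤ ⟪gradient G x, u⟫ := by
    rw [inner_reweightedDirection]; positivity
  have hstep : α * (L * σ ^ 2) ≤ 2 := (le_div_iff₀ (by positivity)).1 hα'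
  refine apply_sub_smul_le_of_lipschitz_gradient hG hGL x u (by positivity) ?_
  calc L * (α / Fintype.card ι) * ‖u‖ ^ 2
      ≤ L * (α / Fintype.card ι) * (Fintype.card ι * σ ^ 2 * ⟪gradient G x, u⟫) := by
        gcongr; exact norm_reweightedDirection_sq_le _ g hg
    _ = α * (L * σ ^ 2) * ⟪gradient G x, u⟫ := by field_simp
    _ ≤ 2 * ⟪gradient G x, u⟫ := by gcongr

theorem reweighted_sgd_monotone_descent_general
    (d N M n : ℕ) (hn : 0 < n) (hMN : M ≤ N)
    (σ L : ℝ) (hσ : 0 < σ) (hL : 0 < L)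
    (f : Fin N → EuclideanSpace ℝ (Fin d) → ℝ)
    (hf : ∀ i, ContDiff ℝ 1 (f i))
    (hfb : ∀ i x, ‖gradient (f i) x‖ ≤ σ)
    (G : EuclideanSpace ℝ (Fin d) → ℝ)
    (hG : ∀ θ, G θ = (1 / (M : ℝ)) * ∑ i : Fin M, f (Fin.castLE hMN i) θ)
    (hGL : ∀ x y, ‖gradient G x - gradient G y‖ ≤ L * ‖x - y‖)
    (U : EuclideanSpace ℝ (Fin d) → (Fin n → Fin N) → ℝ → EuclideanSpace ℝ (Fin d))
    (hU : ∀ θ B α, U θ B α = θ - (α / (n : ℝ)) • ∑ k : Fin n,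
        max ⟪gradient G θ, gradient (f (B k)) θ⟫ 0 • gradient (f (B k)) θ)
    (α : ℕ → ℝ) (hα : ∀ t, 0 ≤ α t) (hα' : ∀ t, α t ≤ 2 / (L * σ ^ 2))
    (B : ℕ → (Fin n → Fin N))
    (θ : ℕ → EuclideanSpace ℝ (Fin d))
    (hθ : ∀ t, θ (t + 1) = U (θ t) (B t) (α t)) :
    ∀ t, G (θ (t + 1)) ≤ G (θ t) := by
  have hGd : Differentiable ℝ G := by
    rw [show G = _ from funext hG]
    exact .const_mul (.fun_sum fun i _ => (hf _).differentiable one_ne_zero) _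
  have : Nonempty (Fin n) := ⟨⟨0, hn⟩⟩
  intro t
  have h := apply_sub_smul_reweightedDirection_le hGd hGL hL hσ (hα t) (hα' t)
    (fun k => gradient (f (B t k)) (θ t)) (fun k => hfb _ _) (θ t)
  rwa [Fintype.card_fin, reweightedDirection, ← hU, ← hθ] at h

/-- Lemma 1, monotonicity part: if the step sizes satisfy
`0 ≤ α t ≤ 2/(L·σ²)`, then along the reweighted SGD iteration
`θ (t+1) = U (θ t) (B t) (α t)` the validation loss monotonically decreases
for any sequence of training batches. -/
theorem reweighted_sgd_monotone_descent
    (d N M n : ℕ) (hd : 0 < d) (hN : 0 < N) (hM : 0 < M) (hn : 0 < n) (hMN : M ≤ N)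
    (σ L : ℝ) (hσ : 0 < σ) (hL : 0 < L)
    (f : Fin N → EuclideanSpace ℝ (Fin d) → ℝ)
    (hf : ∀ i, ContDiff ℝ 1 (f i))
    (hfb : ∀ i x, ‖gradient (f i) x‖ ≤ σ)
    (G : EuclideanSpace ℝ (Fin d) → ℝ)
    (hG : ∀ θ, G θ = (1 / (M : ℝ)) * ∑ i : Fin M, f (Fin.castLE hMN i) θ)
    (hGL : ∀ x y, ‖gradient G x - gradient G y‖ ≤ L * ‖x - y‖)
    (U : EuclideanSpace ℝ (Fin d) → (Fin n → Fin N) → ℝ → EuclideanSpace ℝ (Fin d))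
    (hU : ∀ θ B α, U θ B α = θ - (α / (n : ℝ)) • ∑ k : Fin n,
        max ⟪gradient G θ, gradient (f (B k)) θ⟫ 0 • gradient (f (B k)) θ)
    (α : ℕ → ℝ) (hα : ∀ t, 0 ≤ α t) (hα' : ∀ t, α t ≤ 2 / (L * σ ^ 2))
    (B : ℕ → (Fin n → Fin N))
    (θ : ℕ → EuclideanSpace ℝ (Fin d))
    (hθ : ∀ t, θ (t + 1) = U (θ t) (B t) (α t)) :
    ∀ t, G (θ (t + 1)) ≤ G (θ t) :=
  reweighted_sgd_monotone_descent_general d N M n hn hMN σ L hσ hL f hf hfb G hG hGL U hU α hα hα' B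
    θ hθ
end

section
/- Suppose μ(i ∈ B) > 0 for every index i ∈ {1, …, M}. Then for every θ ∈ ℝ^d, the expectation E_{B∼μ}[T(θ, B)] equals 0 if and only if ∇G(θ) = 0; equivalently, E_{B∼μ}[T(θ, B)] > 0 if and only if ∇G(θ) ≠ 0. -/
/-!
`∇G(θ)` is a nonnegative multiple of `∑_{i ≤ M} ∇f_i(θ)`. If `E[T(θ, B)] = 0`, every batch of
positive probability has `T(θ, B) = 0`, i.e. `⟪∇G, ∇f_i⟫ ≤ 0` for each of its indices; since each
`i ≤ M` lies in such a batch, `‖∇G‖² = (1/M) ∑_{i ≤ M} ⟪∇G, ∇f_i⟫ ≤ 0`.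
-/

open scoped RealInnerProductSpace BigOperators

theorem gradient_const_mul_sum {F ι : Type*} [NormedAddCommGroup F] [InnerProductSpace ℝ F]
    [CompleteSpace F] {f : ι → F → ℝ} {s : Finset ι} {x : F} (c : ℝ)
    (hf : ∀ i ∈ s, DifferentiableAt ℝ (f i) x) :
    gradient (fun y => c * ∑ i ∈ s, f i y) x = c • ∑ i ∈ s, gradient (f i) x := by
  refine ext_inner_right ℝ fun v => ?_
  rw [inner_gradient_left, fderiv_const_mul (DifferentiableAt.fun_sum hf), fderiv_fun_sum hf,
    inner_smul_left, sum_inner]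
  simp [inner_gradient_left]

theorem eq_zero_of_eq_smul_sum_of_inner_nonpos {F ι : Type*} [NormedAddCommGroup F]
    [InnerProductSpace ℝ F] {g : F} {v : ι → F} {s : Finset ι} {c : ℝ} (hc : 0 ≤ c)
    (hg : g = c • ∑ i ∈ s, v i) (hv : ∀ i ∈ s, ⟪g, v i⟫ ≤ 0) : g = 0 := by
  have hself : ⟪g, g⟫ = c * ∑ i ∈ s, ⟪g, v i⟫ := by
    conv_lhs => rhs; rw [hg]
    rw [inner_smul_right, inner_sum]
  exact real_inner_self_nonpos.mp
    (hself ▸ mul_nonpos_of_nonneg_of_nonpos hc (Finset.sum_nonpos hv))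

theorem Finset.sum_sq_max_zero_eq_zero_iff {ι : Type*} {s : Finset ι} {a : ι → ℝ} :
    ∑ k ∈ s, max (a k) 0 ^ 2 = 0 ↔ ∀ k ∈ s, a k ≤ 0 := by
  simp [Finset.sum_eq_zero_iff_of_nonneg fun k _ => sq_nonneg (max (a k) 0)]

theorem Finset.exists_mem_eq_zero_of_sum_mul_eq_zero {ι : Type*} [Fintype ι] {w t : ι → ℝ}
    (hw : ∀ i, 0 ≤ w i) (ht : ∀ i, 0 ≤ t i) (h : ∑ i, w i * t i = 0) {u : Finset ι}
    (hu : 0 < ∑ i ∈ u, w i) : ∃ i ∈ u, t i = 0 := by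
  obtain ⟨i, hiu, hwi⟩ := Finset.exists_lt_of_sum_lt (s := u) (f := fun _ => 0) (g := w)
    (by rwa [Finset.sum_const_zero])
  have hwt : w i * t i = 0 :=
    (Finset.sum_eq_zero_iff_of_nonneg fun j _ => mul_nonneg (hw j) (ht j)).mp h i
      (Finset.mem_univ i)
  exact ⟨i, hiu, (mul_eq_zero.mp hwt).resolve_left hwi.ne'⟩

theorem expected_T_eq_zero_iff_grad_eq_zero_general
    (d N M n : ℕ) (hMN : M ≤ N)
    (f : Fin N → EuclideanSpace ℝ (Fin d) → ℝ)
    (hf : ∀ i, ContDiff ℝ 1 (f i))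
    (G : EuclideanSpace ℝ (Fin d) → ℝ)
    (hG : ∀ θ, G θ = (1 / (M : ℝ)) * ∑ i : Fin M, f (Fin.castLE hMN i) θ)
    (T : EuclideanSpace ℝ (Fin d) → (Fin n → Fin N) → ℝ)
    (hT : ∀ θ B, T θ B = ∑ k : Fin n, (max ⟪gradient G θ, gradient (f (B k)) θ⟫ 0) ^ 2)
    (μ : (Fin n → Fin N) → ℝ)
    (hμ0 : ∀ B, 0 ≤ μ B)
    (hμp : ∀ i : Fin M,
      0 < ∑ B ∈ Finset.univ.filter (fun B : Fin n → Fin N => ∃ k, B k = Fin.castLE hMN i), μ B)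
    (θ : EuclideanSpace ℝ (Fin d)) :
    ((∑ B : Fin n → Fin N, μ B * T θ B) = 0 ↔ gradient G θ = 0) ∧
      (0 < (∑ B : Fin n → Fin N, μ B * T θ B) ↔ gradient G θ ≠ 0) := by
  have hgrad :
      gradient G θ = (1 / (M : ℝ)) • ∑ i : Fin M, gradient (f (Fin.castLE hMN i)) θ := by
    rw [show G = _ from funext hG]
    exact gradient_const_mul_sum _ fun i _ => ((hf _).differentiable one_ne_zero).differentiableAt
  have hT0 (B) : T θ B = 0 ↔ ∀ k, ⟪gradient G θ, gradient (f (B k)) θ⟫ ≤ 0 := by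
    rw [hT, Finset.sum_sq_max_zero_eq_zero_iff]
    simp only [Finset.mem_univ, forall_const]
  have hTnn : ∀ B, 0 ≤ T θ B := fun B =>
    (hT θ B).symm ▸ Finset.sum_nonneg fun k _ => sq_nonneg _
  have hmain : (∑ B, μ B * T θ B) = 0 ↔ gradient G θ = 0 := by
    refine ⟨fun hE => eq_zero_of_eq_smul_sum_of_inner_nonpos (by positivity) hgrad
      fun i _ => ?_, fun hg => Finset.sum_eq_zero fun B _ => ?_⟩
    · obtain ⟨B, hB, hTB⟩ := Finset.exists_mem_eq_zero_of_sum_mul_eq_zero hμ0 hTnn hE (hμp i)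
      obtain ⟨k, hk⟩ := (Finset.mem_filter.mp hB).2
      exact hk ▸ (hT0 B).mp hTB k
    · rw [(hT0 B).mpr fun k => by simp [hg], mul_zero]
  have hE_nn : 0 ≤ ∑ B, μ B * T θ B :=
    Finset.sum_nonneg fun B _ => mul_nonneg (hμ0 B) (hTnn B)
  exact ⟨hmain, hE_nn.lt_iff_ne'.trans (not_congr hmain)⟩

/-- if `μ(i ∈ B) > 0` for every index `i ∈ {1, …, M}`, then for every `θ`,
`E_{B∼μ}[T(θ, B)] = 0` iff `∇G(θ) = 0`; equivalently, `E_{B∼μ}[T(θ, B)] > 0` iff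
`∇G(θ) ≠ 0`. -/
theorem expected_T_eq_zero_iff_grad_eq_zero
    (d N M n : ℕ) (hd : 0 < d) (hN : 0 < N) (hM : 0 < M) (hn : 0 < n) (hMN : M ≤ N)
    (f : Fin N → EuclideanSpace ℝ (Fin d) → ℝ)
    (hf : ∀ i, ContDiff ℝ 1 (f i))
    (G : EuclideanSpace ℝ (Fin d) → ℝ)
    (hG : ∀ θ, G θ = (1 / (M : ℝ)) * ∑ i : Fin M, f (Fin.castLE hMN i) θ)
    (T : EuclideanSpace ℝ (Fin d) → (Fin n → Fin N) → ℝ)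
    (hT : ∀ θ B, T θ B = ∑ k : Fin n, (max ⟪gradient G θ, gradient (f (B k)) θ⟫ 0) ^ 2)
    (μ : (Fin n → Fin N) → ℝ)
    (hμ0 : ∀ B, 0 ≤ μ B) (hμ1 : ∑ B : Fin n → Fin N, μ B = 1)
    (hμp : ∀ i : Fin M,
      0 < ∑ B ∈ Finset.univ.filter (fun B : Fin n → Fin N => ∃ k, B k = Fin.castLE hMN i), μ B)
    (θ : EuclideanSpace ℝ (Fin d)) :
    ((∑ B : Fin n → Fin N, μ B * T θ B) = 0 ↔ gradient G θ = 0) ∧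
      (0 < (∑ B : Fin n → Fin N, μ B * T θ B) ↔ gradient G θ ≠ 0) :=
  expected_T_eq_zero_iff_grad_eq_zero_general d N M n hMN f hf G hG T hT μ hμ0 hμp θ
end

section
/- Suppose p > 0 is such that μ(i ∈ B) ≥ p for every index i ∈ {1, …, M}. Then for every θ ∈ ℝ^d, the expected value of T under a batch drawn from μ is lower bounded by the fourth power of the validation gradient norm: E_{B∼μ}[T(θ, B)] ≥ p · ‖∇G(θ)‖⁴. -/
/-!
Write `g = ∇G(θ)`. Since `g` is the average of the `∇fᵢ(θ)` over `i < M`, `‖g‖²` is the average of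
the `⟪g, ∇fᵢ(θ)⟫`, so some `i < M` has `‖g‖² ≤ max ⟪g, ∇fᵢ(θ)⟫ 0 =: m`. Every batch containing `i`
has `T(θ, B) ≥ m² ≥ ‖g‖⁴`, and such batches have total mass at least `p`.
-/

open scoped RealInnerProductSpace

open Finset

section Gradient

variable {ι F : Type*} [NormedAddCommGroup F] [InnerProductSpace ℝ F] [CompleteSpace F]
  {f : F → ℝ} {f' x : F}

theorem HasGradientAt.fun_sum {A : ι → F → ℝ} {A' : ι → F} (s : Finset ι)
    (h : ∀ i ∈ s, HasGradientAt (A i) (A' i) x) :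
    HasGradientAt (fun y => ∑ i ∈ s, A i y) (∑ i ∈ s, A' i) x := by
  rw [hasGradientAt_iff_hasFDerivAt, map_sum]
  exact HasFDerivAt.fun_sum h

theorem HasGradientAt.const_mul (c : ℝ) (h : HasGradientAt f f' x) :
    HasGradientAt (fun y => c * f y) (c • f') x := by
  rw [hasGradientAt_iff_hasFDerivAt, map_smul]
  exact h.hasFDerivAt.const_mul c

end Gradient

theorem exists_norm_sq_le_inner_of_eq_average {ι F : Type*} [Fintype ι] [Nonempty ι]
    [NormedAddCommGroup F] [InnerProductSpace ℝ F] {v : ι → F} {g : F}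
    (hg : g = (1 / (Fintype.card ι : ℝ)) • ∑ i, v i) : ∃ i, ‖g‖ ^ 2 ≤ ⟪g, v i⟫ := by
  have hsum : ∑ i, v i = (Fintype.card ι : ℝ) • g := by
    rw [hg, smul_smul, mul_one_div_cancel (by positivity), one_smul]
  obtain ⟨i, -, hi⟩ := exists_le_of_sum_le univ_nonempty (f := fun _ => ‖g‖ ^ 2)
    (g := fun i => ⟪g, v i⟫) <| by
      rw [← inner_sum, hsum, inner_smul_right, real_inner_self_eq_norm_sq, sum_const,
        card_univ, nsmul_eq_mul]
  exact ⟨i, hi⟩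

theorem sum_filter_mul_le_sum_mul {Ω : Type*} [Fintype Ω] {μ X : Ω → ℝ} {P : Ω → Prop}
    [DecidablePred P] {c : ℝ} (hμ : ∀ ω, 0 ≤ μ ω) (hX : ∀ ω, 0 ≤ X ω)
    (hc : ∀ ω, P ω → c ≤ X ω) :
    (∑ ω ∈ univ.filter P, μ ω) * c ≤ ∑ ω, μ ω * X ω := calc
  (∑ ω ∈ univ.filter P, μ ω) * c ≤ ∑ ω ∈ univ.filter P, μ ω * X ω := by
    rw [sum_mul]
    exact sum_le_sum fun ω hω => mul_le_mul_of_nonneg_left (hc ω (mem_filter.mp hω).2) (hμ ω)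
  _ ≤ ∑ ω, μ ω * X ω :=
    sum_le_sum_of_subset_of_nonneg (filter_subset _ _) fun ω _ _ => mul_nonneg (hμ ω) (hX ω)

theorem expected_T_ge_p_grad_pow_four_general
    (d N M n : ℕ) (hM : 0 < M) (hMN : M ≤ N)
    (f : Fin N → EuclideanSpace ℝ (Fin d) → ℝ)
    (hf : ∀ i, ContDiff ℝ 1 (f i))
    (G : EuclideanSpace ℝ (Fin d) → ℝ)
    (hG : ∀ θ, G θ = (1 / (M : ℝ)) * ∑ i : Fin M, f (Fin.castLE hMN i) θ)
    (T : EuclideanSpace ℝ (Fin d) → (Fin n → Fin N) → ℝ)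
    (hT : ∀ θ B, T θ B = ∑ k : Fin n, (max ⟪gradient G θ, gradient (f (B k)) θ⟫ 0) ^ 2)
    (μ : (Fin n → Fin N) → ℝ)
    (hμ0 : ∀ B, 0 ≤ μ B)
    (p : ℝ)
    (hμp : ∀ i : Fin M,
      p ≤ ∑ B ∈ Finset.univ.filter (fun B : Fin n → Fin N => ∃ k, B k = Fin.castLE hMN i), μ B)
    (θ : EuclideanSpace ℝ (Fin d)) :
    p * ‖gradient G θ‖ ^ 4 ≤ ∑ B : Fin n → Fin N, μ B * T θ B := by
  have : Nonempty (Fin M) := ⟨⟨0, hM⟩⟩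
  have hg : gradient G θ =
      (1 / (Fintype.card (Fin M) : ℝ)) • ∑ i : Fin M, gradient (f (Fin.castLE hMN i)) θ := by
    rw [Fintype.card_fin, funext hG]
    exact (HasGradientAt.fun_sum _ fun i _ =>
      ((hf _).differentiable one_ne_zero θ).hasGradientAt).const_mul _ |>.gradient
  obtain ⟨i, hi⟩ := exists_norm_sq_le_inner_of_eq_average hg
  set g := gradient G θ
  have hT0 : ∀ B, 0 ≤ T θ B := fun B => by rw [hT]; positivity
  calc p * ‖g‖ ^ 4
      ≤ (∑ B ∈ univ.filter (fun B : Fin n → Fin N => ∃ k, B k = Fin.castLE hMN i), μ B) *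
          (max ⟪g, gradient (f (Fin.castLE hMN i)) θ⟫ 0) ^ 2 := by
        refine mul_le_mul (hμp i) ?_ (by positivity) (sum_nonneg fun B _ => hμ0 B)
        rw [show ‖g‖ ^ 4 = (‖g‖ ^ 2) ^ 2 by ring]
        exact pow_le_pow_left₀ (sq_nonneg _) (hi.trans (le_max_left _ _)) 2
    _ ≤ ∑ B, μ B * T θ B := by
        refine sum_filter_mul_le_sum_mul hμ0 hT0 ?_
        rintro B ⟨k, hk⟩
        rw [hT, ← hk]
        exact single_le_sum (f := fun j => (max ⟪g, gradient (f (B j)) θ⟫ 0) ^ 2)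
          (fun j _ => sq_nonneg _) (mem_univ k)

/-- if `μ(i ∈ B) ≥ p > 0` for every index `i ∈ {1, …, M}`, then for every `θ`,
the expected value of `T` under a batch drawn from `μ` is lower bounded by the fourth power
of the validation gradient norm: `E_{B∼μ}[T(θ, B)] ≥ p · ‖∇G(θ)‖⁴`. -/
theorem expected_T_ge_p_grad_pow_four
    (d N M n : ℕ) (hd : 0 < d) (hN : 0 < N) (hM : 0 < M) (hn : 0 < n) (hMN : M ≤ N)
    (f : Fin N → EuclideanSpace ℝ (Fin d) → ℝ)
    (hf : ∀ i, ContDiff ℝ 1 (f i))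
    (G : EuclideanSpace ℝ (Fin d) → ℝ)
    (hG : ∀ θ, G θ = (1 / (M : ℝ)) * ∑ i : Fin M, f (Fin.castLE hMN i) θ)
    (T : EuclideanSpace ℝ (Fin d) → (Fin n → Fin N) → ℝ)
    (hT : ∀ θ B, T θ B = ∑ k : Fin n, (max ⟪gradient G θ, gradient (f (B k)) θ⟫ 0) ^ 2)
    (μ : (Fin n → Fin N) → ℝ)
    (hμ0 : ∀ B, 0 ≤ μ B) (hμ1 : ∑ B : Fin n → Fin N, μ B = 1)
    (p : ℝ) (hp : 0 < p)
    (hμp : ∀ i : Fin M,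
      p ≤ ∑ B ∈ Finset.univ.filter (fun B : Fin n → Fin N => ∃ k, B k = Fin.castLE hMN i), μ B)
    (θ : EuclideanSpace ℝ (Fin d)) :
    p * ‖gradient G θ‖ ^ 4 ≤ ∑ B : Fin n → Fin N, μ B * T θ B :=
  expected_T_ge_p_grad_pow_four_general d N M n hM hMN f hf G hG T hT μ hμ0 p hμp θ
end

section
/- Let θ be a random vector in ℝ^d defined on a probability space, and let B be a batch drawn from μ independently of θ, where μ(i ∈ B) ≥ p > 0 for every index i ∈ {1, …, M}. Then M · E[T(θ, B)] ≥ (p/M) · ( ∑_{i=1}^M E[max{⟨∇G(θ), ∇f_i(θ)⟩, 0}] )², where all expectations are assumed finite. -/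
open scoped RealInnerProductSpace BigOperators
open MeasureTheory Finset

/-!
Write `gᵢ = max ⟪∇G(θ), ∇fᵢ(θ)⟫ 0`. Since `T(θ, B) = ∑_{k} g_{B k}²`, the `μ`-average of
`E[T(θ, B)]` counts each `E[gᵢ²]` with weight at least `μ(i ∈ B) ≥ p`, so it dominates
`p ∑ᵢ E[gᵢ²]`. Jensen gives `E[gᵢ]² ≤ E[gᵢ²]` and Cauchy–Schwarz gives
`(∑ᵢ E[gᵢ])² ≤ M ∑ᵢ E[gᵢ]²`; the remaining factor `M ≥ 1` only weakens the bound.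
-/

lemma sq_integral_le_integral_sq {Ω : Type*} [MeasurableSpace Ω] {ℙ : Measure Ω}
    [IsProbabilityMeasure ℙ] {g : Ω → ℝ} (hg : Integrable g ℙ)
    (hg2 : Integrable (fun ω => g ω ^ 2) ℙ) :
    (∫ ω, g ω ∂ℙ) ^ 2 ≤ ∫ ω, g ω ^ 2 ∂ℙ :=
  (even_two.convexOn_pow (𝕜 := ℝ)).map_integral_le (continuous_pow 2).continuousOn
    isClosed_univ (by simp) hg hg2

lemma sq_sum_integral_le_card_mul_sum_integral_sq {Ω ι : Type*} [MeasurableSpace Ω]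
    {ℙ : Measure Ω} [IsProbabilityMeasure ℙ] (s : Finset ι) {g : ι → Ω → ℝ}
    (hg : ∀ i ∈ s, Integrable (g i) ℙ) (hg2 : ∀ i ∈ s, Integrable (fun ω => g i ω ^ 2) ℙ) :
    (∑ i ∈ s, ∫ ω, g i ω ∂ℙ) ^ 2 ≤ #s * ∑ i ∈ s, ∫ ω, g i ω ^ 2 ∂ℙ :=
  sq_sum_le_card_mul_sum_sq.trans <| mul_le_mul_of_nonneg_left
    (sum_le_sum fun i hi => sq_integral_le_integral_sq (hg i hi) (hg2 i hi)) (by positivity)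

section Batches

variable {R ι β γ : Type*} [Fintype ι] [DecidableEq β] [Fintype γ]

lemma sum_filter_mem_batch_le_sum_batch [AddCommMonoid R] [PartialOrder R]
    [IsOrderedAddMonoid R] {e : γ → β} (he : Function.Injective e)
    {c : β → R} (hc : ∀ j, 0 ≤ c j) (B : ι → β) :
    ∑ i ∈ univ.filter (fun i => ∃ k, B k = e i), c (e i) ≤ ∑ k, c (B k) := by
  calc ∑ i ∈ univ.filter (fun i => ∃ k, B k = e i), c (e i)
      = ∑ j ∈ (univ.filter (fun i => ∃ k, B k = e i)).image e, c j :=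
        (sum_image fun _ _ _ _ h => he h).symm
    _ ≤ ∑ j ∈ univ.image B, c j := by
        refine sum_le_sum_of_subset_of_nonneg ?_ fun j _ _ => hc j
        intro j hj
        simp only [mem_image, mem_filter, mem_univ, true_and] at hj ⊢
        obtain ⟨i, ⟨k, hk⟩, rfl⟩ := hj
        exact ⟨k, hk⟩
    _ ≤ ∑ k, c (B k) := sum_image_le_of_nonneg fun j _ => hc j

lemma sum_coverage_mul_eq_sum_mul_sum_filter [DecidableEq ι] [Fintype β]
    [NonUnitalNonAssocSemiring R]
    (μ : (ι → β) → R) (e : γ → β) (c : β → R) :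
    ∑ i, (∑ B ∈ univ.filter (fun B : ι → β => ∃ k, B k = e i), μ B) * c (e i) =
      ∑ B, μ B * ∑ i ∈ univ.filter (fun i => ∃ k, B k = e i), c (e i) := by
  simp_rw [sum_mul, mul_sum, sum_filter]
  exact sum_comm

lemma mul_sum_le_sum_mul_sum_batch [DecidableEq ι] [Fintype β] [Semiring R] [PartialOrder R]
    [IsOrderedRing R] {μ : (ι → β) → R} (hμ0 : ∀ B, 0 ≤ μ B) {p : R}
    {e : γ → β} (he : Function.Injective e)
    (hμp : ∀ i, p ≤ ∑ B ∈ univ.filter (fun B : ι → β => ∃ k, B k = e i), μ B)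
    {c : β → R} (hc : ∀ j, 0 ≤ c j) :
    p * ∑ i, c (e i) ≤ ∑ B, μ B * ∑ k, c (B k) :=
  calc p * ∑ i, c (e i)
      ≤ ∑ i, (∑ B ∈ univ.filter (fun B : ι → β => ∃ k, B k = e i), μ B) * c (e i) := by
        rw [mul_sum]
        exact sum_le_sum fun i _ => mul_le_mul_of_nonneg_right (hμp i) (hc _)
    _ = ∑ B, μ B * ∑ i ∈ univ.filter (fun i => ∃ k, B k = e i), c (e i) :=
        sum_coverage_mul_eq_sum_mul_sum_filter μ e c
    _ ≤ ∑ B, μ B * ∑ k, c (B k) :=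
        sum_le_sum fun B _ =>
          mul_le_mul_of_nonneg_left (sum_filter_mem_batch_le_sum_batch he hc B) (hμ0 B)

end Batches

theorem M_mul_expected_T_ge_cauchy_schwarz_bound_general
    (d N M n : ℕ) (hM : 0 < M) (hn : 0 < n) (hMN : M ≤ N)
    (f : Fin N → EuclideanSpace ℝ (Fin d) → ℝ)
    (G : EuclideanSpace ℝ (Fin d) → ℝ)
    (T : EuclideanSpace ℝ (Fin d) → (Fin n → Fin N) → ℝ)
    (hT : ∀ θ B, T θ B = ∑ k : Fin n, (max ⟪gradient G θ, gradient (f (B k)) θ⟫ 0) ^ 2)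
    (μ : (Fin n → Fin N) → ℝ)
    (hμ0 : ∀ B, 0 ≤ μ B)
    (p : ℝ) (hp : 0 < p)
    (hμp : ∀ i : Fin M,
      p ≤ ∑ B ∈ Finset.univ.filter (fun B : Fin n → Fin N => ∃ k, B k = Fin.castLE hMN i), μ B)
    (Ω : Type*) [MeasurableSpace Ω] (ℙ : Measure Ω) [IsProbabilityMeasure ℙ]
    (θ : Ω → EuclideanSpace ℝ (Fin d))
    (hint : ∀ B : Fin n → Fin N, Integrable (fun ω => T (θ ω) B) ℙ)
    (hint' : ∀ i : Fin M, Integrable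
      (fun ω => max ⟪gradient G (θ ω), gradient (f (Fin.castLE hMN i)) (θ ω)⟫ 0) ℙ) :
    (p / (M : ℝ)) *
        (∑ i : Fin M,
          ∫ ω, max ⟪gradient G (θ ω), gradient (f (Fin.castLE hMN i)) (θ ω)⟫ 0 ∂ℙ) ^ 2 ≤
      (M : ℝ) * ∑ B : Fin n → Fin N, μ B * ∫ ω, T (θ ω) B ∂ℙ := by
  set g : Fin N → Ω → ℝ := fun j ω => max ⟪gradient G (θ ω), gradient (f j) (θ ω)⟫ 0
  have int_sq : ∀ j, Integrable (fun ω => g j ω ^ 2) ℙ := fun j => by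
    have constant_batch : (fun ω => T (θ ω) fun _ => j) = fun ω => (n : ℝ) * g j ω ^ 2 := by
      funext ω
      simp [hT, g]
    have := hint fun _ => j
    rwa [constant_batch, integrable_const_mul_iff (by simp [hn.ne'])] at this
  have expected_T : ∀ B, ∫ ω, T (θ ω) B ∂ℙ = ∑ k, ∫ ω, g (B k) ω ^ 2 ∂ℙ := fun B => by
    simp_rw [hT]
    exact integral_finsetSum _ fun k _ => int_sq (B k)
  have coverage : p * ∑ i : Fin M, ∫ ω, g (Fin.castLE hMN i) ω ^ 2 ∂ℙ ≤
      ∑ B, μ B * ∑ k, ∫ ω, g (B k) ω ^ 2 ∂ℙ :=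
    -- `congr!` reconciles the instance `Nat.decidableExistsFin` in `hμp` with the generic one.
    mul_sum_le_sum_mul_sum_batch hμ0 (Fin.castLE_injective hMN)
      (fun i => (hμp i).trans_eq (by congr!)) fun j => integral_nonneg fun ω => sq_nonneg _
  have jensen_cauchy_schwarz := sq_sum_integral_le_card_mul_sum_integral_sq univ
    (fun i _ => hint' i) fun i _ => int_sq (Fin.castLE hMN i)
  rw [card_univ, Fintype.card_fin] at jensen_cauchy_schwarz
  simp only [expected_T]
  calc p / M * (∑ i, ∫ ω, g (Fin.castLE hMN i) ω ∂ℙ) ^ 2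
      ≤ p / M * (M * ∑ i : Fin M, ∫ ω, g (Fin.castLE hMN i) ω ^ 2 ∂ℙ) := by
        gcongr
    _ = p * ∑ i : Fin M, ∫ ω, g (Fin.castLE hMN i) ω ^ 2 ∂ℙ := by
        field_simp
    _ ≤ _ := coverage
    _ ≤ _ := le_mul_of_one_le_left ((by positivity : (0 : ℝ) ≤ _).trans coverage)
        (by exact_mod_cast hM)

/-- let `θ` be a random vector in ℝ^d and let `B` be a batch drawn from `μ`
independently of `θ`, where `μ(i ∈ B) ≥ p > 0` for every index `i ∈ {1, …, M}`. Then
`M · E[T(θ, B)] ≥ (p/M) · (∑_{i=1}^M E[max{⟨∇G(θ), ∇f_i(θ)⟩, 0}])²`, where all expectations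
are assumed finite. (Independence is expressed by computing the joint expectation as the
`μ`-average of the expectations over `θ`.) -/
theorem M_mul_expected_T_ge_cauchy_schwarz_bound
    (d N M n : ℕ) (hd : 0 < d) (hN : 0 < N) (hM : 0 < M) (hn : 0 < n) (hMN : M ≤ N)
    (f : Fin N → EuclideanSpace ℝ (Fin d) → ℝ)
    (hf : ∀ i, ContDiff ℝ 1 (f i))
    (G : EuclideanSpace ℝ (Fin d) → ℝ)
    (hG : ∀ θ, G θ = (1 / (M : ℝ)) * ∑ i : Fin M, f (Fin.castLE hMN i) θ)
    (T : EuclideanSpace ℝ (Fin d) → (Fin n → Fin N) → ℝ)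
    (hT : ∀ θ B, T θ B = ∑ k : Fin n, (max ⟪gradient G θ, gradient (f (B k)) θ⟫ 0) ^ 2)
    (μ : (Fin n → Fin N) → ℝ)
    (hμ0 : ∀ B, 0 ≤ μ B) (hμ1 : ∑ B : Fin n → Fin N, μ B = 1)
    (p : ℝ) (hp : 0 < p)
    (hμp : ∀ i : Fin M,
      p ≤ ∑ B ∈ Finset.univ.filter (fun B : Fin n → Fin N => ∃ k, B k = Fin.castLE hMN i), μ B)
    (Ω : Type*) [MeasurableSpace Ω] (ℙ : Measure Ω) [IsProbabilityMeasure ℙ]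
    (θ : Ω → EuclideanSpace ℝ (Fin d)) (hθ : Measurable θ)
    (hint : ∀ B : Fin n → Fin N, Integrable (fun ω => T (θ ω) B) ℙ)
    (hint' : ∀ i : Fin M, Integrable
      (fun ω => max ⟪gradient G (θ ω), gradient (f (Fin.castLE hMN i)) (θ ω)⟫ 0) ℙ) :
    (p / (M : ℝ)) *
        (∑ i : Fin M,
          ∫ ω, max ⟪gradient G (θ ω), gradient (f (Fin.castLE hMN i)) (θ ω)⟫ 0 ∂ℙ) ^ 2 ≤
      (M : ℝ) * ∑ B : Fin n → Fin N, μ B * ∫ ω, T (θ ω) B ∂ℙ :=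
  M_mul_expected_T_ge_cauchy_schwarz_bound_general d N M n hM hn hMN f G T hT μ hμ0 p hp hμp Ω ℙ θ
    hint hint'
end
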